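/- Assume W : ℝ → ℝ is continuous, nonnegative, and satisfies (W-i): there exists η > 0 with W(s) ≥ η s² for |s| ≤ 1 and W(s) ≥ η for |s| ≥ 1. Let 𝐮_n = (u_n, v_n) be a sequence in X with E(𝐮_n) → 0. Then, up to a subsequence, ‖𝐮_n‖ → 0; i.e., u_n → 0 in H²(ℝ) and v_n → 0 in L²(ℝ). -/

import Mathlib

/-!
Write `U = ‖u‖₂²` and `w = ∫ min (u², 1)`. By (W-i), `η w ≤ ∫ W(u)`, so `E → 0` sends
`‖v‖₂`, `‖u''‖₂` and `w` to zero. The part of `U` where `u² > 1` is controlled by Agmon's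
inequality `‖u‖∞² ≤ 2 ‖u‖₂ ‖u'‖₂` and the interpolation `‖u'‖₂² ≤ ‖u‖₂ ‖u''‖₂`: once
`‖u''‖₂ ≤ 1` they give `U ≤ (1 + 2 U^{3/4}) w`, hence `U ≤ 3 w` as soon as `w < 1/3`.
-/

open MeasureTheory Filter Topology

noncomputable section

/-- `u ∈ H²(ℝ)`: `u` has everywhere first derivative `u'` and second derivative `u''`,
with `u, u', u'' ∈ L²(ℝ)`. -/
def InH2 (u u' u'' : ℝ → ℝ) : Prop :=
  (∀ x, HasDerivAt u (u' x) x) ∧ (∀ x, HasDerivAt u' (u'' x) x) ∧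
    MemLp u 2 ∧ MemLp u' 2 ∧ MemLp u'' 2

/-- `(u,v) ∈ X = H²(ℝ) × L²(ℝ)`. -/
def InX (u u' u'' v : ℝ → ℝ) : Prop :=
  InH2 u u' u'' ∧ MemLp v 2

/-- The squared `X`-norm `‖𝐮‖² = ∫ (v² + u_xx² + u²)`. -/
def normSq (u u'' v : ℝ → ℝ) : ℝ :=
  ∫ x : ℝ, ((v x) ^ 2 + (u'' x) ^ 2 + (u x) ^ 2)

/-- The energy `E(𝐮) = ½∫(v² + u_xx²) + ∫ W(u)`. -/
def energy (W u u'' v : ℝ → ℝ) : ℝ :=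
  (1 / 2) * (∫ x : ℝ, ((v x) ^ 2 + (u'' x) ^ 2)) + ∫ x : ℝ, W (u x)

/-- The momentum (hylenic charge) `C(𝐮) = −∫ v u_x`. -/
def momentum (u' v : ℝ → ℝ) : ℝ :=
  -∫ x : ℝ, v x * u' x

section SquareIntegrable

variable {α : Type*} [MeasurableSpace α] {μ : Measure α} {f g : α → ℝ}

theorem integral_abs_mul_le_sqrt_mul_sqrt (hf : MemLp f 2 μ) (hg : MemLp g 2 μ) :
    ∫ x, |f x * g x| ∂μ ≤ √(∫ x, f x ^ 2 ∂μ) * √(∫ x, g x ^ 2 ∂μ) := by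
  have hf' : MemLp f (ENNReal.ofReal 2) μ := by rwa [ENNReal.ofReal_ofNat]
  have hg' : MemLp g (ENNReal.ofReal 2) μ := by rwa [ENNReal.ofReal_ofNat]
  have holder := integral_mul_norm_le_Lp_mul_Lq Real.HolderConjugate.two_two hf' hg'
  simp only [Real.norm_eq_abs, Real.rpow_two, sq_abs, ← Real.sqrt_eq_rpow] at holder
  simpa only [abs_mul] using holder

theorem integrable_min_sq_one (hf : MemLp f 2 μ) : Integrable (fun x => min (f x ^ 2) 1) μ := by
  refine hf.integrable_sq.mono'
    (((continuous_pow 2).min continuous_const).comp_aestronglyMeasurable hf.1)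
    (ae_of_all _ fun x => ?_)
  rw [Real.norm_eq_abs, abs_of_nonneg (le_min (sq_nonneg _) zero_le_one)]
  exact min_le_left _ _

end SquareIntegrable

section LineEstimates

variable {u u' u'' : ℝ → ℝ}

/-- Agmon's inequality. -/
theorem sq_le_two_mul_sqrt_mul_sqrt (hd : ∀ x, HasDerivAt u (u' x) x)
    (hu : MemLp u 2) (hu' : MemLp u' 2) (x : ℝ) :
    u x ^ 2 ≤ 2 * (√(∫ t, u t ^ 2) * √(∫ t, u' t ^ 2)) := by
  have hd_sq : ∀ y, HasDerivAt (fun t => u t ^ 2) (2 * (u y * u' y)) y := fun y => by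
    simpa [mul_assoc] using (hd y).fun_pow 2
  have hint : Integrable (fun t => 2 * (u t * u' t)) := (hu.integrable_mul hu').const_mul 2
  have hlim : Tendsto (fun t => u t ^ 2) atBot (𝓝 0) :=
    tendsto_zero_of_hasDerivAt_of_integrableOn_Iic (a := x) (fun y _ => hd_sq y)
      hint.integrableOn hu.integrable_sq.integrableOn
  have hFTC : ∫ t in Set.Iic x, 2 * (u t * u' t) = u x ^ 2 := by
    rw [integral_Iic_of_hasDerivAt_of_tendsto' (fun y _ => hd_sq y) hint.integrableOn hlim,
      sub_zero]
  calc u x ^ 2 = ∫ t in Set.Iic x, 2 * (u t * u' t) := hFTC.symm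
    _ ≤ ∫ t in Set.Iic x, |2 * (u t * u' t)| :=
        (le_abs_self _).trans abs_integral_le_integral_abs
    _ ≤ ∫ t, |2 * (u t * u' t)| :=
        setIntegral_le_integral hint.abs (ae_of_all _ fun t => abs_nonneg _)
    _ = 2 * ∫ t, |u t * u' t| := by simp only [abs_mul, abs_two, integral_const_mul]
    _ ≤ 2 * (√(∫ t, u t ^ 2) * √(∫ t, u' t ^ 2)) := by
        gcongr; exact integral_abs_mul_le_sqrt_mul_sqrt hu hu'

/-- Integrating `(u u')' = u'² + u u''` gives `‖u'‖₂² = -∫ u u''`. -/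
theorem integral_deriv_sq_le (hd : ∀ x, HasDerivAt u (u' x) x)
    (hd' : ∀ x, HasDerivAt u' (u'' x) x) (hu : MemLp u 2) (hu' : MemLp u' 2)
    (hu'' : MemLp u'' 2) :
    ∫ x, u' x ^ 2 ≤ √(∫ x, u x ^ 2) * √(∫ x, u'' x ^ 2) := by
  have huu'' : Integrable (fun x => u x * u'' x) := hu.integrable_mul hu''
  have hd_mul : ∀ x, HasDerivAt (fun t => u t * u' t) (u' x ^ 2 + u x * u'' x) x := fun x => by
    simpa [sq, mul_comm] using (hd x).fun_mul (hd' x)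
  have hzero : ∫ x, (u' x ^ 2 + u x * u'' x) = 0 :=
    integral_eq_zero_of_hasDerivAt_of_integrable hd_mul (hu'.integrable_sq.add huu'')
      (hu.integrable_mul hu')
  rw [integral_add hu'.integrable_sq huu''] at hzero
  calc ∫ x, u' x ^ 2 = -∫ x, u x * u'' x := by linarith
    _ ≤ ∫ x, |u x * u'' x| := (neg_le_abs _).trans abs_integral_le_integral_abs
    _ ≤ √(∫ x, u x ^ 2) * √(∫ x, u'' x ^ 2) := integral_abs_mul_le_sqrt_mul_sqrt hu hu''

end LineEstimates

def truncatedMass (u : ℝ → ℝ) : ℝ :=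
  ∫ x, min (u x ^ 2) 1

theorem truncatedMass_nonneg (u : ℝ → ℝ) : 0 ≤ truncatedMass u :=
  integral_nonneg fun _ => le_min (sq_nonneg _) zero_le_one

theorem mul_truncatedMass_le_integral {W u : ℝ → ℝ} {η : ℝ}
    (hsmall : ∀ s : ℝ, |s| ≤ 1 → η * s ^ 2 ≤ W s) (hlarge : ∀ s : ℝ, 1 ≤ |s| → η ≤ W s)
    (hu : MemLp u 2) (hW : Integrable (fun x => W (u x))) :
    η * truncatedMass u ≤ ∫ x, W (u x) := by
  rw [truncatedMass, ← integral_const_mul]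
  refine integral_mono ((integrable_min_sq_one hu).const_mul η) hW fun x => ?_
  rcases le_total |u x| 1 with h | h
  · rw [min_eq_left (sq_le_one_iff_abs_le_one _ |>.2 h)]
    exact hsmall _ h
  · rw [min_eq_right (one_le_sq_iff_one_le_abs _ |>.2 h), mul_one]
    exact hlarge _ h

theorem integral_sq_le_mul_truncatedMass {u : ℝ → ℝ} {M : ℝ} (hu : MemLp u 2)
    (hM : ∀ x, u x ^ 2 ≤ M) :
    ∫ x, u x ^ 2 ≤ (1 + M) * truncatedMass u := by
  rw [truncatedMass, ← integral_const_mul]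
  refine integral_mono hu.integrable_sq ((integrable_min_sq_one hu).const_mul _) fun x => ?_
  have hMx := hM x
  rcases le_total (u x ^ 2) 1 with h | h
  · rw [min_eq_left h]; nlinarith [sq_nonneg (u x)]
  · rw [min_eq_right h]; linarith

/-- Read `U = ‖u‖₂²`, `D = ‖u'‖₂²` and `w = truncatedMass u`. -/
theorem le_three_mul_of_le_one_add_mul {U D w : ℝ} (hU : 0 ≤ U) (hD : D ≤ √U)
    (hUw : U ≤ (1 + 2 * (√U * √D)) * w) (hw : w < 1 / 3) :
    U ≤ 3 * w := by
  have hsU := Real.sq_sqrt hU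
  have hw0 : 0 ≤ w := by
    by_contra! h
    nlinarith [mul_nonneg (Real.sqrt_nonneg U) (Real.sqrt_nonneg D)]
  rcases le_total U 1 with hU1 | hU1
  · have h1 : √U ≤ 1 := Real.sqrt_le_one.2 hU1
    have h2 : √D ≤ 1 := Real.sqrt_le_one.2 (hD.trans h1)
    have : √U * √D ≤ 1 := mul_le_one₀ h1 (Real.sqrt_nonneg _) h2
    nlinarith
  · have h1 : 1 ≤ √U := Real.one_le_sqrt.2 hU1
    have h2 : √D ≤ √U :=
      (Real.sqrt_le_sqrt (hD.trans (by nlinarith))).trans_eq (Real.sqrt_sq (by linarith))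
    have : √U * √D ≤ U := by nlinarith [Real.sqrt_nonneg D]
    nlinarith

theorem integral_sq_le_three_mul_truncatedMass {u u' u'' : ℝ → ℝ} (hu : InH2 u u' u'')
    (hu''_le : ∫ x, u'' x ^ 2 ≤ 1) (hmass : truncatedMass u < 1 / 3) :
    ∫ x, u x ^ 2 ≤ 3 * truncatedMass u := by
  obtain ⟨hd, hd', hu, hu', hu''⟩ := hu
  have hinterp : ∫ x, u' x ^ 2 ≤ √(∫ x, u x ^ 2) := by
    refine (integral_deriv_sq_le hd hd' hu hu' hu'').trans ?_
    exact mul_le_of_le_one_right (Real.sqrt_nonneg _) (Real.sqrt_le_one.2 hu''_le)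
  exact le_three_mul_of_le_one_add_mul (integral_nonneg fun _ => sq_nonneg _) hinterp
    (integral_sq_le_mul_truncatedMass hu (sq_le_two_mul_sqrt_mul_sqrt hd hu hu')) hmass

section Energy

variable {W u u'' v : ℝ → ℝ}

theorem energy_eq_add (hu'' : MemLp u'' 2) (hv : MemLp v 2) :
    energy W u u'' v = (1 / 2) * ((∫ x, v x ^ 2) + ∫ x, u'' x ^ 2) + ∫ x, W (u x) := by
  rw [energy, integral_add hv.integrable_sq hu''.integrable_sq]

theorem normSq_eq_add (hu : MemLp u 2) (hu'' : MemLp u'' 2) (hv : MemLp v 2) :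
    normSq u u'' v = (∫ x, v x ^ 2) + (∫ x, u'' x ^ 2) + ∫ x, u x ^ 2 := by
  have hvu'' : Integrable (fun x => v x ^ 2 + u'' x ^ 2) :=
    hv.integrable_sq.add hu''.integrable_sq
  rw [normSq, integral_add hvu'' hu.integrable_sq, integral_add hv.integrable_sq hu''.integrable_sq]

end Energy

theorem tendsto_integrals_of_tendsto_energy {W : ℝ → ℝ} (hWpos : ∀ s, 0 ≤ W s)
    {u u'' v : ℕ → ℝ → ℝ} (hu'' : ∀ n, MemLp (u'' n) 2) (hv : ∀ n, MemLp (v n) 2)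
    (hE : Tendsto (fun n => energy W (u n) (u'' n) (v n)) atTop (𝓝 0)) :
    Tendsto (fun n => ∫ x, v n x ^ 2) atTop (𝓝 0) ∧
      Tendsto (fun n => ∫ x, u'' n x ^ 2) atTop (𝓝 0) ∧
      Tendsto (fun n => ∫ x, W (u n x)) atTop (𝓝 0) := by
  have hA n : 0 ≤ ∫ x, v n x ^ 2 := integral_nonneg fun _ => sq_nonneg _
  have hB n : 0 ≤ ∫ x, u'' n x ^ 2 := integral_nonneg fun _ => sq_nonneg _
  have hC n : 0 ≤ ∫ x, W (u n x) := integral_nonneg fun _ => hWpos _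
  have h2E : Tendsto (fun n => 2 * energy W (u n) (u'' n) (v n)) atTop (𝓝 0) := by
    simpa using hE.const_mul 2
  refine ⟨squeeze_zero hA (fun n => ?_) h2E, squeeze_zero hB (fun n => ?_) h2E,
    squeeze_zero hC (fun n => ?_) hE⟩ <;>
  · rw [energy_eq_add (hu'' n) (hv n)]
    linarith [hA n, hB n, hC n]

theorem energy_to_zero_implies_norm_to_zero_general (W : ℝ → ℝ)
    (hWpos : ∀ s, 0 ≤ W s)
    (hWi : ∃ η : ℝ, 0 < η ∧ (∀ s : ℝ, |s| ≤ 1 → η * s ^ 2 ≤ W s) ∧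
      (∀ s : ℝ, 1 ≤ |s| → η ≤ W s))
    (u u' u'' v : ℕ → ℝ → ℝ)
    (hX : ∀ n, InX (u n) (u' n) (u'' n) (v n))
    (hint : ∀ n, Integrable (fun x => W (u n x)))
    (hE : Filter.Tendsto (fun n => energy W (u n) (u'' n) (v n)) Filter.atTop (nhds 0)) :
    ∃ φ : ℕ → ℕ, StrictMono φ ∧
      Filter.Tendsto (fun k => Real.sqrt (normSq (u (φ k)) (u'' (φ k)) (v (φ k))))
        Filter.atTop (nhds 0) := by
  obtain ⟨η, hη, hsmall, hlarge⟩ := hWi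
  obtain ⟨hv, hu'', hW⟩ := tendsto_integrals_of_tendsto_energy hWpos
    (fun n => (hX n).1.2.2.2.2) (fun n => (hX n).2) hE
  have hmass : Tendsto (fun n => truncatedMass (u n)) atTop (𝓝 0) := by
    refine squeeze_zero (fun n => truncatedMass_nonneg _) (fun n => ?_)
      (by simpa using hW.div_const η)
    exact (le_div_iff₀' hη).2
      (mul_truncatedMass_le_integral hsmall hlarge (hX n).1.2.2.1 (hint n))
  have hu : Tendsto (fun n => ∫ x, u n x ^ 2) atTop (𝓝 0) := by
    refine squeeze_zero' (.of_forall fun n => integral_nonneg fun _ => sq_nonneg _) ?_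
      (by simpa using hmass.const_mul 3)
    filter_upwards [hu''.eventually (gt_mem_nhds one_pos),
      hmass.eventually (gt_mem_nhds (by norm_num : (0 : ℝ) < 1 / 3))] with n hn1 hn2
    exact integral_sq_le_three_mul_truncatedMass (hX n).1 hn1.le hn2
  refine ⟨id, strictMono_id, ?_⟩
  have hnorm : Tendsto (fun n => normSq (u n) (u'' n) (v n)) atTop (𝓝 0) := by
    simpa only [add_zero] using ((hv.add hu'').add hu).congr fun n =>
      (normSq_eq_add (hX n).1.2.2.1 (hX n).1.2.2.2.2 (hX n).2).symm
  simpa using hnorm.sqrt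

/-- Lemma 5: if `W ≥ 0` is continuous and satisfies (W-i), and `𝐮ₙ = (uₙ,vₙ)` is a
sequence of finite-energy states in `X` with `E(𝐮ₙ) → 0`, then up to a subsequence
`‖𝐮ₙ‖ → 0`. -/
theorem energy_to_zero_implies_norm_to_zero (W : ℝ → ℝ) (hWc : Continuous W)
    (hWpos : ∀ s, 0 ≤ W s)
    (hWi : ∃ η : ℝ, 0 < η ∧ (∀ s : ℝ, |s| ≤ 1 → η * s ^ 2 ≤ W s) ∧
      (∀ s : ℝ, 1 ≤ |s| → η ≤ W s))
    (u u' u'' v : ℕ → ℝ → ℝ)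
    (hX : ∀ n, InX (u n) (u' n) (u'' n) (v n))
    (hint : ∀ n, Integrable (fun x => W (u n x)))
    (hE : Filter.Tendsto (fun n => energy W (u n) (u'' n) (v n)) Filter.atTop (nhds 0)) :
    ∃ φ : ℕ → ℕ, StrictMono φ ∧
      Filter.Tendsto (fun k => Real.sqrt (normSq (u (φ k)) (u'' (φ k)) (v (φ k))))
        Filter.atTop (nhds 0) :=
  energy_to_zero_implies_norm_to_zero_general W hWpos hWi u u' u'' v hX hint hE
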